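/- Fix odd q ≥ 3, c = (q−1)/2, and φ-parameter cos(π/q). For x ∈ (Z/qZ)^n lying in the sphere S_u^1 (exactly u coordinates equal ±1, the remaining n−u equal 0), the Fourier transform of the indicator of the sphere S_ℓ^c (exactly ℓ coordinates equal ±c, the rest 0) evaluates as: 1̂_{S_ℓ^c}(x) = Σ_{j=0}^ℓ C(u,j) C(n−u, ℓ−j) (−1)^j 2^ℓ cos(π/q)^j = (2cos(π/q))^ℓ · K_ℓ(u; q'), where q' = 1 + 1/cos(π/q) and K_ℓ(u;q') = Σ_j C(u,j) C(n−u,ℓ−j) (−1)^j (q'−1)^{ℓ−j} is the Krawtchouk polynomial with parameter q'. -/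

import Mathlib

/-!
For `a ≠ 0`, the indicator `1_{S_ℓ^a}(y)` is the coefficient of `X^ℓ` in `∏ᵢ w(yᵢ)`, where
`w(0) = 1`, `w(±a) = X` and `w = 0` elsewhere (`sphereWeight`). The character
`y ↦ e(⟨ω, y⟩ / q)` is a product over the coordinates, so the Fourier transform of `1_{S_ℓ^a}` at `ω`
is the coefficient of `X^ℓ` in `∏ᵢ (1 + (ψ(ωᵢ a) + ψ(-ωᵢ a)) X)`. For `a = c = (q - 1) / 2` the
bracket is `2 cos(2πc/q) = -2 cos(π/q)` when `ωᵢ = ±1` and `2` when `ωᵢ = 0`, so the product is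
`(1 - 2 cos(π/q) X)^u (1 + 2X)^(n-u)`, whose coefficient of `X^ℓ` is the stated sum.
-/

open Finset Real

/-- Fourier transform on `(ZMod q)^n`. -/
noncomputable def ft {q n : ℕ} [NeZero q] (f : (Fin n → ZMod q) → ℝ)
    (ω : Fin n → ZMod q) : ℂ :=
  ∑ x : Fin n → ZMod q, (f x : ℂ) *
    Complex.exp (2 * Real.pi * Complex.I * (((∑ i, ω i * x i : ZMod q)).val : ℂ) / q)

/-- The Krawtchouk polynomial `K_ℓ(u; q')` of the Hamming scheme of length `n`, with
(possibly non-integer) parameter `q'`. -/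
noncomputable def Kr (n ℓ u : ℕ) (q' : ℝ) : ℝ :=
  ∑ j ∈ Finset.range (ℓ + 1),
    (u.choose j : ℝ) * ((n - u).choose (ℓ - j) : ℝ) * (-1) ^ j * (q' - 1) ^ (ℓ - j)

/-- Indicator of the sphere `S_ℓ^a`: exactly `ℓ` coordinates equal to `±a`, the remaining
`n - ℓ` equal to `0`. -/
def sphInd {q : ℕ} (n ℓ : ℕ) (a : ZMod q) (y : Fin n → ZMod q) : ℝ :=
  if (Finset.univ.filter fun i => y i = a ∨ y i = -a).card = ℓ ∧
     (Finset.univ.filter fun i => y i = 0).card = n - ℓ then 1 else 0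

open Polynomial

lemma AddChar.map_sum_eq_prod {A M ι : Type*} [AddCommMonoid A] [CommMonoid M] (ψ : AddChar A M)
    (s : Finset ι) (f : ι → A) : ψ (∑ i ∈ s, f i) = ∏ i ∈ s, ψ (f i) := by
  induction s using Finset.cons_induction <;> simp [AddChar.map_add_eq_mul, *]

lemma ft_eq_sum_mul_prod_stdAddChar {q n : ℕ} [NeZero q] (f : (Fin n → ZMod q) → ℝ)
    (ω : Fin n → ZMod q) :
    ft f ω = ∑ y, (f y : ℂ) * ∏ i, ZMod.stdAddChar (ω i * y i) := by
  refine Finset.sum_congr rfl fun y _ => ?_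
  rw [← AddChar.map_sum_eq_prod, ZMod.stdAddChar_apply, ZMod.toCircle_apply]

lemma coeff_one_add_C_mul_X_pow {R : Type*} [CommSemiring R] (a : R) (m k : ℕ) :
    ((1 + C a * X) ^ m).coeff k = m.choose k * a ^ k := by
  rw [add_comm, add_pow, finsetSum_coeff]
  simp only [one_pow, mul_one, mul_pow, ← C_pow, ← C_eq_natCast, mul_right_comm _ (X ^ _), ← C_mul,
    coeff_C_mul_X_pow, Finset.sum_ite_eq, Finset.mem_range]
  split_ifs with h
  · ring
  · rw [Nat.choose_eq_zero_of_lt (by omega), Nat.cast_zero, zero_mul]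

lemma coeff_one_add_C_mul_X_pow_mul {R : Type*} [CommSemiring R] (a b : R) (m k ℓ : ℕ) :
    ((1 + C a * X) ^ m * (1 + C b * X) ^ k).coeff ℓ =
      ∑ j ∈ range (ℓ + 1), m.choose j * k.choose (ℓ - j) * a ^ j * b ^ (ℓ - j) := by
  rw [coeff_mul, Finset.Nat.sum_antidiagonal_eq_sum_range_succ_mk]
  simp only [coeff_one_add_C_mul_X_pow]
  exact Finset.sum_congr rfl fun j _ => by ring

lemma prod_eq_pow_mul_pow_of_card_add_card {ι M : Type*} [Fintype ι] [CommMonoid M]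
    {p r : ι → Prop} [DecidablePred p] [DecidablePred r] {f : ι → M} {α β : M}
    (hp : ∀ i, p i → f i = α) (hr : ∀ i, r i → f i = β) (hpr : ∀ i, p i → ¬r i)
    (hcard : #(univ.filter p) + #(univ.filter r) = Fintype.card ι) :
    ∏ i, f i = α ^ #(univ.filter p) * β ^ #(univ.filter r) := by
  have hcompl : univ.filter r = univ.filter fun i => ¬p i := by
    refine eq_of_subset_of_card_le (monotone_filter_right _ fun i _ hri hpi => hpr i hpi hri) ?_
    have := card_filter_add_card_filter_not (s := univ) p
    rw [card_univ] at this
    omega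
  rw [← prod_filter_mul_prod_filter_not univ p, ← hcompl,
    prod_congr rfl fun i hi => hp i (mem_filter.1 hi).2, prod_const,
    prod_congr rfl fun i hi => hr i (mem_filter.1 hi).2, prod_const]

noncomputable def sphereWeight {G R : Type*} [Neg G] [Zero G] [DecidableEq G] [Semiring R]
    (a b : G) : R[X] :=
  (if b = 0 then 1 else 0) + (if b = a ∨ b = -a then X else 0)

lemma sum_sphereWeight_mul_C {G R : Type*} [AddGroup G] [Fintype G] [DecidableEq G]
    [CommSemiring R] {a : G} (ha : a ≠ -a) (f : G → R) :
    ∑ b, sphereWeight a b * C (f b) = C (f 0) + C (f a + f (-a)) * X := by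
  have hpair : (univ.filter fun b : G => b = a ∨ b = -a) = {a, -a} := by
    ext b; simp
  simp only [sphereWeight, add_mul, ite_mul, one_mul, zero_mul, sum_add_distrib, sum_ite_eq',
    mem_univ, if_true, ← sum_filter, hpair, sum_pair ha, C_add]
  ring

lemma sphInd_eq_coeff_prod_sphereWeight {q n : ℕ} (ℓ : ℕ) {a : ZMod q} (ha : a ≠ 0)
    (y : Fin n → ZMod q) :
    (sphInd n ℓ a y : ℂ) = (∏ i, (sphereWeight a (y i) : ℂ[X])).coeff ℓ := by
  unfold sphInd
  by_cases hy : ∀ i, y i = 0 ∨ y i = a ∨ y i = -a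
  · have hsupp : (univ.filter fun i => y i = a ∨ y i = -a) = univ.filter fun i => ¬y i = 0 := by
      ext i; rcases hy i with h | h | h <;> simp [h, ha, ha.symm]
    have hweight : ∀ i, (sphereWeight a (y i) : ℂ[X]) = if y i = 0 then 1 else X := by
      intro i; rcases hy i with h | h | h <;> simp [sphereWeight, h, ha, ha.symm]
    have hzero := card_filter_add_card_filter_not (s := univ) fun i => y i = 0
    rw [card_univ, Fintype.card_fin] at hzero
    simp only [hweight, prod_ite, prod_const_one, prod_const, one_mul, coeff_X_pow, hsupp]
    split_ifs <;> first | rfl | omega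
  · push Not at hy
    obtain ⟨i, hi⟩ := hy
    have hvanish : (sphereWeight a (y i) : ℂ[X]) = 0 := by simp [sphereWeight, hi]
    have hdisj : Disjoint (univ.filter fun i => y i = a ∨ y i = -a)
        (univ.filter fun i => y i = 0) := by
      rw [disjoint_filter]; rintro j - (h | h) <;> simp [h, ha]
    have hcover := card_lt_univ_of_notMem (x := i)
      (s := (univ.filter fun i => y i = a ∨ y i = -a) ∪ univ.filter fun i => y i = 0)
      (by simp [hi.1, hi.2.1, hi.2.2])
    rw [card_union_of_disjoint hdisj, Fintype.card_fin] at hcover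
    rw [prod_eq_zero (mem_univ i) hvanish, coeff_zero, if_neg (by omega), Complex.ofReal_zero]

lemma ft_sphInd_eq_coeff_prod {q n : ℕ} [NeZero q] (ℓ : ℕ) {a : ZMod q} (ha₀ : a ≠ 0)
    (ha : a ≠ -a) (ω : Fin n → ZMod q) :
    ft (sphInd n ℓ a) ω = (∏ i, (1 + C (ZMod.stdAddChar (ω i * a) +
      ZMod.stdAddChar (ω i * -a)) * X)).coeff ℓ := by
  have hfactor : ∀ i, ∑ b, sphereWeight a b * C (ZMod.stdAddChar (ω i * b)) =
      1 + C (ZMod.stdAddChar (ω i * a) + ZMod.stdAddChar (ω i * -a)) * X := by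
    intro i
    rw [sum_sphereWeight_mul_C ha, mul_zero, AddChar.map_zero_eq_one, map_one]
  rw [ft_eq_sum_mul_prod_stdAddChar]
  simp_rw [sphInd_eq_coeff_prod_sphereWeight ℓ ha₀]
  simp_rw [← coeff_mul_C, map_prod C, ← prod_mul_distrib, ← finsetSum_coeff]
  rw [← Fintype.prod_sum fun i b => sphereWeight a b * C (ZMod.stdAddChar (ω i * b))]
  simp_rw [hfactor]

lemma ft_sphInd_eq_sum_of_stdAddChar_add {q n : ℕ} [NeZero q] [Fact (1 < q)] (ℓ u : ℕ)
    {a : ZMod q} (ha₀ : a ≠ 0) (ha : a ≠ -a) {w : ℂ}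
    (hw : ZMod.stdAddChar a + ZMod.stdAddChar (-a) = w) (x : Fin n → ZMod q)
    (hx1 : (univ.filter fun i => x i = 1 ∨ x i = -1).card = u)
    (hx0 : (univ.filter fun i => x i = 0).card = n - u) :
    ft (sphInd n ℓ a) x =
      ∑ j ∈ range (ℓ + 1), u.choose j * (n - u).choose (ℓ - j) * w ^ j * 2 ^ (ℓ - j) := by
  have hu : u ≤ n := hx1 ▸ (card_filter_le _ _).trans (card_fin n).le
  rw [ft_sphInd_eq_coeff_prod ℓ ha₀ ha, prod_eq_pow_mul_pow_of_card_add_card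
    (p := fun i => x i = 1 ∨ x i = -1) (r := fun i => x i = 0)
    (α := 1 + C w * X) (β := 1 + C 2 * X) ?_ ?_ ?_ ?_, hx1, hx0, coeff_one_add_C_mul_X_pow_mul]
  · rintro i (h | h) <;> simp [h, hw, add_comm]
  · intro i h; simp [h, one_add_one_eq_two]
  · rintro i (h | h) <;> simp [h]
  · rw [hx1, hx0, Fintype.card_fin]; omega

lemma ZMod.two_mul_natCast_eq_neg_one {N k : ℕ} (hk : 2 * k + 1 = N) :
    2 * (k : ZMod N) = -1 := by
  have h : ((2 * k + 1 : ℕ) : ZMod N) = 0 := by rw [hk, ZMod.natCast_self]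
  push_cast at h
  linear_combination h

lemma ZMod.stdAddChar_add_stdAddChar_neg_of_two_mul_add_one {N k : ℕ} [NeZero N]
    (hk : 2 * k + 1 = N) :
    ZMod.stdAddChar (k : ZMod N) + ZMod.stdAddChar (-(k : ZMod N)) =
      ((-2 * Real.cos (π / N) : ℝ) : ℂ) := by
  have hN : (N : ℝ) ≠ 0 := NeZero.ne _
  have hangle : 2 * π * k / N = π - π / N := by
    rw [← hk]; push_cast; field_simp; ring
  rw [← Int.cast_natCast, ← Int.cast_neg, ZMod.stdAddChar_coe, ZMod.stdAddChar_coe]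
  calc _ = 2 * Complex.cos ((2 * π * k / N : ℝ) : ℂ) := by
        rw [Complex.two_cos]; congr 2 <;> push_cast <;> ring
    _ = _ := by rw [← Complex.ofReal_cos, hangle, Real.cos_pi_sub]; push_cast; ring

lemma Real.cos_pi_div_natCast_pos {q : ℕ} (hq : 2 < q) : 0 < Real.cos (π / q) := by
  refine Real.cos_pos_of_mem_Ioo ⟨by linarith [Real.pi_pos, show 0 < π / q by positivity], ?_⟩
  exact div_lt_div_of_pos_left Real.pi_pos two_pos (by exact_mod_cast hq)

lemma two_mul_pow_mul_Kr {t : ℝ} (ht : t ≠ 0) (n ℓ u : ℕ) :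
    (2 * t) ^ ℓ * Kr n ℓ u (1 + 1 / t) =
      ∑ j ∈ range (ℓ + 1), (u.choose j : ℝ) * ((n - u).choose (ℓ - j) : ℝ) * (-1) ^ j * 2 ^ ℓ *
        t ^ j := by
  rw [Kr, mul_sum]
  refine sum_congr rfl fun j hj => ?_
  rw [mul_pow, ← pow_mul_pow_sub t (Nat.le_of_lt_succ (mem_range.1 hj)), add_sub_cancel_left,
    div_pow, one_pow]
  field_simp

theorem stmt10_general (q n ℓ u : ℕ) [NeZero q] (hodd : Odd q) (hq3 : 3 ≤ q)
    (c : ZMod q) (hc : c = (((q - 1) / 2 : ℕ) : ZMod q))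
    (x : Fin n → ZMod q)
    (hx1 : (Finset.univ.filter fun i => x i = 1 ∨ x i = -1).card = u)
    (hx0 : (Finset.univ.filter fun i => x i = 0).card = n - u) :
    ft (sphInd n ℓ c) x =
      ((∑ j ∈ Finset.range (ℓ + 1),
        (u.choose j : ℝ) * ((n - u).choose (ℓ - j) : ℝ) * (-1) ^ j * 2 ^ ℓ *
          Real.cos (π / q) ^ j : ℝ) : ℂ) ∧
    ft (sphInd n ℓ c) x =
      (((2 * Real.cos (π / q)) ^ ℓ * Kr n ℓ u (1 + 1 / Real.cos (π / q)) : ℝ) : ℂ) := by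
  have : Fact (1 < q) := ⟨by omega⟩
  have hk : 2 * ((q - 1) / 2) + 1 = q := by have := Nat.odd_iff.mp hodd; omega
  have hc2 : 2 * c = -1 := hc ▸ ZMod.two_mul_natCast_eq_neg_one hk
  have hc₀ : c ≠ 0 := fun h => one_ne_zero (α := ZMod q) (by linear_combination hc2 - 2 * h)
  have hc_ne_neg : c ≠ -c := fun h => one_ne_zero (α := ZMod q) (by linear_combination hc2 - h)
  have hpair := ZMod.stdAddChar_add_stdAddChar_neg_of_two_mul_add_one hk
  rw [← hc] at hpair
  have hmain : ft (sphInd n ℓ c) x =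
      ((∑ j ∈ range (ℓ + 1), (u.choose j : ℝ) * ((n - u).choose (ℓ - j) : ℝ) * (-1) ^ j * 2 ^ ℓ *
          Real.cos (π / q) ^ j : ℝ) : ℂ) := by
    rw [ft_sphInd_eq_sum_of_stdAddChar_add ℓ u hc₀ hc_ne_neg hpair x hx1 hx0]
    push_cast
    refine sum_congr rfl fun j hj => ?_
    rw [← pow_mul_pow_sub 2 (Nat.le_of_lt_succ (mem_range.1 hj)), neg_mul, neg_pow, mul_pow]
    ring
  refine ⟨hmain, ?_⟩
  rw [hmain, two_mul_pow_mul_Kr (Real.cos_pi_div_natCast_pos (by omega)).ne']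

theorem stmt10 (q n ℓ u : ℕ) [NeZero q] (hodd : Odd q) (hq3 : 3 ≤ q)
    (hℓ : ℓ ≤ n) (hu : u ≤ n)
    (c : ZMod q) (hc : c = (((q - 1) / 2 : ℕ) : ZMod q))
    (x : Fin n → ZMod q)
    (hx1 : (Finset.univ.filter fun i => x i = 1 ∨ x i = -1).card = u)
    (hx0 : (Finset.univ.filter fun i => x i = 0).card = n - u) :
    ft (sphInd n ℓ c) x =
      ((∑ j ∈ Finset.range (ℓ + 1),
        (u.choose j : ℝ) * ((n - u).choose (ℓ - j) : ℝ) * (-1) ^ j * 2 ^ ℓ *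
          Real.cos (π / q) ^ j : ℝ) : ℂ) ∧
    ft (sphInd n ℓ c) x =
      (((2 * Real.cos (π / q)) ^ ℓ * Kr n ℓ u (1 + 1 / Real.cos (π / q)) : ℝ) : ℂ) :=
  stmt10_general q n ℓ u hodd hq3 c hc x hx1 hx0
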